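/- arXiv:1009.5203 — 3 statements merged into one kernel-verified Lean document; each statement's English description precedes it below -/
import Mathlib

section
/- Let C be a commutative ring and A a C-algebra that is a finitely generated projective C-module such that the natural map j_A : A ⊗_C A^op → End_C(A), j_A(a⊗b)(r) = arb, is an isomorphism (i.e. A is Azumaya over C). Then the center Z(A) equals C (i.e. the structure map C → Z(A) is bijective). -/
open TensorProduct

/-- The natural map `j_A : A ⊗_C A^op → End_C(A)`, `j_A(a ⊗ b)(r) = a * r * b`. -/
noncomputable def envelopingMap (C A : Type*) [CommRing C] [Ring A] [Algebra C A] :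
    A ⊗[C] Aᵐᵒᵖ →ₗ[C] Module.End C A :=
  TensorProduct.lift <| LinearMap.mk₂ C
    (fun a b => (LinearMap.mulRight C b.unop).comp (LinearMap.mulLeft C a))
    (by intro a a' b; ext r; simp [add_mul])
    (by intro c a b; ext r; simp [smul_mul_assoc])
    (by intro a b b'; ext r; simp [mul_add])
    (by intro c a b; ext r; simp [mul_smul_comm])

/-!
Left multiplication by a central element `z` commutes with `a * - * b`, so, `j_A` being onto,
it commutes with every `C`-linear endomorphism of `A`; applied to the rank-one map `l(-) • 1`
for a functional `l`, this gives `l (z * x) • 1 = l x • z`. For a faithful finitely generated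
projective module the values `l x` generate the unit ideal (dual basis lemma plus Nakayama),
so `z` is a `C`-multiple of `1`.
-/

namespace Module

variable {R M : Type*}

section CommSemiring

variable [CommSemiring R] [AddCommMonoid M] [Module R M]

variable (R M) in
def traceIdeal : Ideal R :=
  ⨆ f : Dual R M, LinearMap.range f

theorem apply_mem_traceIdeal (f : Dual R M) (x : M) : f x ∈ traceIdeal R M :=
  Submodule.mem_iSup_of_mem f (LinearMap.mem_range_self f x)

theorem traceIdeal_smul_top [Projective R M] : traceIdeal R M • (⊤ : Submodule R M) = ⊤ := by
  obtain ⟨s, hs⟩ := projective_def'.mp ‹Projective R M›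
  refine eq_top_iff.mpr fun x _ => ?_
  rw [← LinearMap.id_apply (R := R) x, ← hs, LinearMap.comp_apply,
    Finsupp.linearCombination_apply]
  exact Submodule.finsuppSum_mem _ _ _ _ fun p _ =>
    Submodule.smul_mem_smul (apply_mem_traceIdeal ((Finsupp.lapply p).comp s) x) trivial

end CommSemiring

theorem traceIdeal_eq_top [CommRing R] [AddCommGroup M] [Module R M] [Module.Finite R M]
    [Projective R M] [FaithfulSMul R M] : traceIdeal R M = ⊤ := by
  obtain ⟨r, hr, hr0⟩ := Submodule.exists_sub_one_mem_and_smul_eq_zero_of_fg_of_le_smul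
    (traceIdeal R M) ⊤ (Module.finite_def.mp ‹_›) traceIdeal_smul_top.ge
  have : r = 0 := FaithfulSMul.eq_of_smul_eq_smul fun x : M => by simpa using hr0 x trivial
  rw [this, zero_sub, neg_mem_iff] at hr
  exact (Ideal.eq_top_iff_one _).mpr hr

end Module

section Azumaya

variable {C A : Type*} [CommRing C] [Ring A] [Algebra C A]

theorem envelopingMap_tmul_apply (a : A) (b : Aᵐᵒᵖ) (r : A) :
    envelopingMap C A (a ⊗ₜ b) r = a * r * b.unop := rfl

theorem envelopingMap_apply_mul_of_mem_center {z : A} (hz : z ∈ Set.center A)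
    (t : A ⊗[C] Aᵐᵒᵖ) (x : A) : envelopingMap C A t (z * x) = z * envelopingMap C A t x := by
  induction t using TensorProduct.induction_on with
  | zero => simp
  | tmul a b =>
    simp only [envelopingMap_tmul_apply, ← mul_assoc, Semigroup.mem_center_iff.mp hz a]
  | add u v hu hv => simp only [map_add, LinearMap.add_apply, hu, hv, mul_add]

theorem mem_range_algebraMap_of_forall_end_apply_mul [Module.Finite C A] [Module.Projective C A]
    [FaithfulSMul C A] {z : A} (hz : ∀ (f : Module.End C A) (x : A), f (z * x) = z * f x) :
    z ∈ Set.range (algebraMap C A) := by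
  let I : Ideal C :=
    (LinearMap.range (Algebra.linearMap C A)).comap (LinearMap.toSpanSingleton C A z)
  have hI : Module.traceIdeal C A ≤ I := iSup_le fun l => by
    rintro _ ⟨x, rfl⟩
    have rank_one : l (z * x) • (1 : A) = l x • z := by
      simpa using hz (l.smulRight 1) x
    exact ⟨l (z * x), by simpa [Algebra.algebraMap_eq_smul_one] using rank_one⟩
  have one_mem : (1 : C) ∈ I :=
    hI (Module.traceIdeal_eq_top (R := C) (M := A) ▸ Submodule.mem_top)
  simpa [I] using one_mem

end Azumaya

/-- If `A` is an Azumaya algebra over the commutative ring `C` (finitely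
generated projective and faithful as a `C`-module, with the enveloping map
`j_A : A ⊗_C A^op → End_C(A)` bijective), then the center of `A` equals `C`: the structure
map `C → A` is injective with image exactly `Z(A)`. -/
theorem azumaya_center_eq_base (C A : Type*) [CommRing C] [Ring A] [Algebra C A]
    [Module.Finite C A] [Module.Projective C A] [FaithfulSMul C A]
    (hAz : Function.Bijective (envelopingMap C A)) :
    Function.Injective (algebraMap C A) ∧
      Set.range (algebraMap C A) = Set.center A := by
  refine ⟨FaithfulSMul.algebraMap_injective C A, ?_⟩
  refine (Set.range_subset_iff.mpr Set.algebraMap_mem_center).antisymm fun z hz => ?_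
  refine mem_range_algebraMap_of_forall_end_apply_mul fun f x => ?_
  obtain ⟨t, rfl⟩ := hAz.surjective f
  exact envelopingMap_apply_mul_of_mem_center hz t x
end

section
/- Kostant duality: for every ℂ-algebra R and ℂ-coalgebra C there is a natural bijection between algebra homomorphisms R → C^* and coalgebra homomorphisms C → R⁰, where C^* is the dual algebra of C and R⁰ is the dual coalgebra of R. -/
open TensorProduct

variable (R : Type*) [Ring R] [Algebra ℂ R]
variable (C : Type*) [AddCommGroup C] [Module ℂ C] [Coalgebra ℂ C]

/-- A linear map `φ : R → C^*` is an algebra homomorphism into the dual (convolution)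
algebra of the coalgebra `C` iff `φ(1) = ε_C` and
`φ(rs)(c) = Σ φ(r)(c₍₁₎)·φ(s)(c₍₂₎)` for all `r, s ∈ R`, `c ∈ C`. -/
def IsDualAlgebraHom (φ : R →ₗ[ℂ] Module.Dual ℂ C) : Prop :=
  φ 1 = Coalgebra.counit (R := ℂ) ∧
  ∀ (r s : R) (c : C),
    φ (r * s) c
      = LinearMap.mul' ℂ ℂ
          (TensorProduct.map (φ r) (φ s) (Coalgebra.comul (R := ℂ) c))

/-- A linear map `ψ : C → R^*` is a coalgebra homomorphism into the finite dual coalgebra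
`R⁰` iff every `ψ(c)` kills a two-sided ideal of finite codimension (i.e. lands in `R⁰`),
`ψ` is counital (`ψ(c)(1) = ε_C(c)`), and it intertwines the comultiplications:
`ψ(c)(rs) = Σ ψ(c₍₁₎)(r)·ψ(c₍₂₎)(s)`. -/
def IsFiniteDualCoalgebraHom (ψ : C →ₗ[ℂ] Module.Dual ℂ R) : Prop :=
  (∀ c : C, ∃ I : TwoSidedIdeal R, (∀ x ∈ I, ψ c x = 0) ∧
      FiniteDimensional ℂ (R ⧸ Submodule.span ℂ (I : Set R))) ∧
  (∀ c : C, ψ c 1 = Coalgebra.counit (R := ℂ) c) ∧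
  ∀ (c : C) (r s : R),
    ψ c (r * s)
      = LinearMap.mul' ℂ ℂ
          (TensorProduct.map ((LinearMap.applyₗ r).comp ψ) ((LinearMap.applyₗ s).comp ψ)
            (Coalgebra.comul (R := ℂ) c))

/-! Transposition `φ ↦ φ.flip` turns the multiplicativity of `φ : R → C^*` into the
comultiplicativity of `φ.flip : C → R^*` verbatim, so the only content is that an algebra map
`R → C^*` automatically lands in `R⁰`. Writing `(Δ ⊗ id) Δ c = Σ c₁ ⊗ c₂ ⊗ c₃`, we get
`φ (s * a * t) c = Σ φ s c₁ * φ a c₂ * φ t c₃`, so the largest two-sided ideal inside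
`ker (φ · c)` contains the common kernel of the finitely many functionals `φ · c₂`, and therefore
has finite codimension. -/

namespace LinearMap

variable {K A M : Type*} [Semiring K] [Ring A] [Module K A] [AddCommGroup M] [Module K M]

/-- The largest two-sided ideal contained in `ker f`. -/
def twoSidedKer (f : A →ₗ[K] M) : TwoSidedIdeal A :=
  .mk' {a | ∀ s t : A, f (s * a * t) = 0}
    (by simp)
    (fun hx hy s t => by simp [mul_add, add_mul, hx s t, hy s t])
    (fun hx s t => by simp [hx s t])
    (fun {x _} hy s t => by simpa [mul_assoc] using hy (s * x) t)
    (fun {_ y} hx s t => by simpa [mul_assoc] using hx s (y * t))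

theorem mem_twoSidedKer {f : A →ₗ[K] M} {a : A} :
    a ∈ twoSidedKer f ↔ ∀ s t : A, f (s * a * t) = 0 :=
  TwoSidedIdeal.mem_mk' _ _ _ _ _ _ a

theorem apply_eq_zero_of_mem_twoSidedKer {f : A →ₗ[K] M} {a : A} (ha : a ∈ twoSidedKer f) :
    f a = 0 := by
  simpa using mem_twoSidedKer.1 ha 1 1

end LinearMap

theorem Submodule.CoFG.of_iInf_ker_le {K M ι : Type*} [CommRing K] [IsNoetherianRing K]
    [AddCommGroup M] [Module K M] [Finite ι] {p : Submodule K M} (g : ι → Module.Dual K M)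
    (h : ⨅ i, LinearMap.ker (g i) ≤ p) : p.CoFG :=
  (CoFG.ker (LinearMap.pi g)).of_le (LinearMap.ker_pi g ▸ h)

namespace IsDualAlgebraHom

variable {R C} {φ : R →ₗ[ℂ] Module.Dual ℂ C}

theorem apply_mul_apply (hφ : IsDualAlgebraHom R C φ) (a b : R) {c : C} {ι : Type*}
    (𝓡 : Coalgebra.Repr ℂ c ι) :
    φ (a * b) c = ∑ i ∈ 𝓡.index, φ a (𝓡.left i) * φ b (𝓡.right i) := by
  simp [hφ.2, ← 𝓡.eq]

theorem exists_finset_forall_mem_twoSidedKer (hφ : IsDualAlgebraHom R C φ) (c : C) :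
    ∃ S : Finset C, ∀ a : R, (∀ m ∈ S, φ a m = 0) → a ∈ LinearMap.twoSidedKer (φ.flip c) := by
  classical
  let 𝓡 (x : C) := Coalgebra.Repr.arbitrary ℂ x
  -- the middle tensor factors `c₂` of `Σ c₁ ⊗ c₂ ⊗ c₃ = (Δ ⊗ id) Δ c`
  refine ⟨(𝓡 c).index.biUnion fun i =>
      (𝓡 ((𝓡 c).left i)).index.image (𝓡 ((𝓡 c).left i)).right, fun a ha => ?_⟩
  refine LinearMap.mem_twoSidedKer.2 fun s t => ?_
  rw [LinearMap.flip_apply, hφ.apply_mul_apply _ _ (𝓡 c)]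
  refine Finset.sum_eq_zero fun i hi => ?_
  rw [hφ.apply_mul_apply _ _ (𝓡 ((𝓡 c).left i)), Finset.sum_eq_zero, zero_mul]
  intro j hj
  rw [ha _ (Finset.mem_biUnion.2 ⟨i, hi, Finset.mem_image_of_mem _ hj⟩), mul_zero]

theorem isFiniteDualCoalgebraHom_flip (hφ : IsDualAlgebraHom R C φ) :
    IsFiniteDualCoalgebraHom R C φ.flip := by
  refine ⟨fun c => ?_, fun c => congr($(hφ.1) c), fun c r s => hφ.2 r s c⟩
  obtain ⟨S, hS⟩ := hφ.exists_finset_forall_mem_twoSidedKer c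
  refine ⟨LinearMap.twoSidedKer (φ.flip c), fun _ => LinearMap.apply_eq_zero_of_mem_twoSidedKer,
    Submodule.CoFG.of_iInf_ker_le (fun m : S => φ.flip m) fun a ha => Submodule.subset_span ?_⟩
  exact hS a fun m hm => (Submodule.mem_iInf _).1 ha ⟨m, hm⟩

end IsDualAlgebraHom

theorem IsFiniteDualCoalgebraHom.isDualAlgebraHom_flip {ψ : C →ₗ[ℂ] Module.Dual ℂ R}
    (hψ : IsFiniteDualCoalgebraHom R C ψ) : IsDualAlgebraHom R C ψ.flip :=
  ⟨LinearMap.ext hψ.2.1, fun r s c => hψ.2.2 c r s⟩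

/-- Kostant duality: for every ℂ-algebra `R` and ℂ-coalgebra `C` there is a
bijection, given by transposition (hence natural in both arguments), between algebra
homomorphisms `R → C^*` and coalgebra homomorphisms `C → R⁰` into the finite dual. -/
theorem kostant_duality :
    ∃ e : {φ : R →ₗ[ℂ] Module.Dual ℂ C // IsDualAlgebraHom R C φ}
        ≃ {ψ : C →ₗ[ℂ] Module.Dual ℂ R // IsFiniteDualCoalgebraHom R C ψ},
      ∀ (φ : {φ : R →ₗ[ℂ] Module.Dual ℂ C // IsDualAlgebraHom R C φ}) (c : C) (r : R),
        ((e φ : C →ₗ[ℂ] Module.Dual ℂ R) c) r = ((φ : R →ₗ[ℂ] Module.Dual ℂ C) r) c :=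
  ⟨(LinearMap.lflip (R₀ := ℂ)).toEquiv.subtypeEquiv fun φ =>
      ⟨IsDualAlgebraHom.isFiniteDualCoalgebraHom_flip,
        fun h => φ.flip_flip ▸ h.isDualAlgebraHom_flip⟩,
    fun _ _ _ => rfl⟩
end

section
/- Let q_n be a primitive n-th root of unity and m = nk with q_m a primitive m-th root of unity such that q_m^{k²} = q_n. Then the assignment U_n ↦ U_m^k, V_n ↦ V_m^k extends to an injective ℂ[s^{±1},t^{±1}]-algebra homomorphism from the quantum torus ℂ_{q_n}[U_n^{±1},V_n^{±1}] (with U_n^n = s, V_n^n = t) into ℂ_{q_m}[U_m^{±1},V_m^{±1}] (with U_m^m = s, V_m^m = t). -/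
/-!
In both quantum tori the monomials `U ^ i * V ^ j` form a basis, and the relation
`V * U = q • (U * V)` gives
`(U ^ a * V ^ b) * (U ^ c * V ^ d) = q ^ (b * c) • (U ^ (a + c) * V ^ (b + d))`.
So the linear map `U_n ^ i * V_n ^ j ↦ U_m ^ (k * i) * V_m ^ (k * j)` is multiplicative precisely
because `q_m ^ (k ^ 2) = q_n`, and it is injective since it sends a basis onto part of a basis.
It sends `s = U_n ^ n` to `U_m ^ (n * k) = s`, likewise `t`, hence commutes with `s^{±1}` and
`t^{±1}`, which generate `ℂ[s^{±1}, t^{±1}]` over `ℂ`.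
-/

section CentralCommutator

variable {G : Type*} [Group G] {z U V : G}

theorem zpow_mul_zpow_of_mul_eq_central_mul (hz : ∀ g, Commute z g) (h : V * U = z * (U * V))
    (b c : ℤ) : V ^ b * U ^ c = z ^ (b * c) * (U ^ c * V ^ b) := by
  have hVU : SemiconjBy V U (z * U) := by rw [SemiconjBy, h, mul_assoc]
  have hVUc : V * U ^ c = z ^ c * (U ^ c * V) := by
    rw [← mul_assoc, ← (hz U).mul_zpow]; exact hVU.zpow_right c
  have hUcV : SemiconjBy (U ^ c) V (z ^ (-c) * V) := by
    rw [SemiconjBy, mul_assoc, hVUc, zpow_neg, inv_mul_cancel_left]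
  have hUcVb := hUcV.zpow_right b
  rw [SemiconjBy, ((hz V).zpow_left (-c)).mul_zpow, ← zpow_mul, mul_assoc] at hUcVb
  rw [hUcVb, ← mul_assoc, ← zpow_add, show b * c + -c * b = 0 by ring, zpow_zero, one_mul]

def quantumMonomial (U V : G) (p : ℤ × ℤ) : G := U ^ p.1 * V ^ p.2

theorem quantumMonomial_mul_quantumMonomial (hz : ∀ g, Commute z g) (h : V * U = z * (U * V))
    (p r : ℤ × ℤ) :
    quantumMonomial U V p * quantumMonomial U V r =
      z ^ (p.2 * r.1) * quantumMonomial U V (p + r) := by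
  simp only [quantumMonomial, Prod.fst_add, Prod.snd_add, zpow_add]
  rw [mul_assoc, ← mul_assoc (V ^ p.2), zpow_mul_zpow_of_mul_eq_central_mul hz h]
  simp only [mul_assoc]
  exact (((hz _).zpow_left _).left_comm _).symm

end CentralCommutator

theorem LinearMap.map_mul_of_map_mul_basis {ι K A B : Type*} [CommSemiring K] [Semiring A]
    [Semiring B] [Algebra K A] [Algebra K B] (b : Module.Basis ι K A) (g : A →ₗ[K] B)
    (h : ∀ i j, g (b i * b j) = g (b i) * g (b j)) (x y : A) : g (x * y) = g x * g y :=
  g.map_mul_iff.2 (LinearMap.ext_basis b b h) x y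

section QuantumTorus

variable {K A : Type*} [CommRing K] [Ring A] [Algebra K A] {q : Kˣ} {U V : Aˣ}

theorem val_quantumMonomial_mul_val_quantumMonomial (h : (V : A) * U = (q : K) • ((U : A) * V))
    (p r : ℤ × ℤ) : ((quantumMonomial U V p : Aˣ) : A) * ((quantumMonomial U V r : Aˣ) : A)
      = ((q ^ (p.2 * r.1) : Kˣ) : K) • ((quantumMonomial U V (p + r) : Aˣ) : A) := by
  set z : Aˣ := Units.map (algebraMap K A : K →* A) q
  have hz : ∀ g, Commute z g := fun g => Commute.units_val_iff.1 (Algebra.commutes _ _)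
  have hzUV : V * U = z * (U * V) := Units.ext <| by simpa [z, Algebra.smul_def] using h
  rw [← Units.val_mul, quantumMonomial_mul_quantumMonomial hz hzUV, Units.val_mul,
    Algebra.smul_def, ← map_zpow]
  rfl

theorem exists_injective_algHom_quantumTorus {B : Type*} [Ring B] [Algebra K B]
    (qB : Kˣ) (k : ℤ) (hk : k ≠ 0) (hq : qB ^ (k ^ 2) = q)
    (h : (V : A) * U = (q : K) • ((U : A) * V)) (bA : Module.Basis (ℤ × ℤ) K A)
    (hbA : ∀ p, bA p = quantumMonomial U V p)
    (UB VB : Bˣ) (hB : (VB : B) * UB = (qB : K) • ((UB : B) * VB))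
    (bB : Module.Basis (ℤ × ℤ) K B)
    (hbB : ∀ p, bB p = quantumMonomial UB VB p) :
    ∃ f : A →ₐ[K] B, Function.Injective f ∧ f U = ↑(UB ^ k) ∧ f V = ↑(VB ^ k) := by
  set g := bA.constr K fun p => bB (k • p)
  have hg : ∀ p, g (bA p) = bB (k • p) := bA.constr_basis K _
  have hg_one : g 1 = 1 := by
    simpa [hbA, hbB, quantumMonomial] using hg 0
  have hmulA : ∀ p r, bA p * bA r = ((q ^ (p.2 * r.1) : Kˣ) : K) • bA (p + r) := by
    simpa only [hbA] using val_quantumMonomial_mul_val_quantumMonomial h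
  have hmulB : ∀ p r, bB p * bB r = ((qB ^ (p.2 * r.1) : Kˣ) : K) • bB (p + r) := by
    simpa only [hbB] using val_quantumMonomial_mul_val_quantumMonomial hB
  have hg_mul_basis : ∀ p r, g (bA p * bA r) = g (bA p) * g (bA r) := by
    intro p r
    have hexp : qB ^ ((k • p).2 * (k • r).1) = q ^ (p.2 * r.1) := by
      rw [← hq, ← zpow_mul]; simp only [Prod.smul_fst, Prod.smul_snd, smul_eq_mul]; ring_nf
    rw [hmulA, map_smul, hg, hg, hg, hmulB, hexp, smul_add]
  refine ⟨AlgHom.ofLinearMap g hg_one (g.map_mul_of_map_mul_basis bA hg_mul_basis),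
    bA.injective_constr_of_linearIndependent (R₂ := K)
      (bB.linearIndependent.comp _ (smul_right_injective _ hk)), ?_, ?_⟩
  · simpa [hbA, hbB, quantumMonomial] using hg (1, 0)
  · simpa [hbA, hbB, quantumMonomial] using hg (0, 1)

end QuantumTorus

theorem Units.eq_on_inv {F M N : Type*} [Monoid M] [Monoid N] [FunLike F M N]
    [MonoidHomClass F M N] (f g : F) {u : Mˣ} (h : f u = g u) : f ↑u⁻¹ = g ↑u⁻¹ :=
  left_inv_eq_right_inv (map_mul_eq_one f u.inv_mul) (h ▸ map_mul_eq_one g u.mul_inv)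

theorem AlgHom.commutes_of_adjoin_eq_top {K L A B : Type*} [CommSemiring K] [CommSemiring L]
    [Semiring A] [Semiring B] [Algebra K L] [Algebra K A] [Algebra K B] [Algebra L A]
    [Algebra L B] [IsScalarTower K L A] [IsScalarTower K L B] (f : A →ₐ[K] B) {S : Set L}
    (hS : Algebra.adjoin K S = ⊤) (h : ∀ x ∈ S, f (algebraMap L A x) = algebraMap L B x)
    (r : L) : f (algebraMap L A r) = algebraMap L B r :=
  DFunLike.congr_fun (AlgHom.ext_of_adjoin_eq_top hS
    (φ₁ := f.comp (IsScalarTower.toAlgHom K L A)) (φ₂ := IsScalarTower.toAlgHom K L B) h) r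

theorem quantum_torus_compatible_embedding_general
    (L A B : Type*) [CommRing L] [Algebra ℂ L] [Ring A] [Ring B]
    [Algebra ℂ A] [Algebra ℂ B] [Algebra L A] [Algebra L B]
    [IsScalarTower ℂ L A] [IsScalarTower ℂ L B]
    (n k : ℕ) (hn : 0 < n) (hk : 0 < k)
    (qn qm : ℂ) (hqm : IsPrimitiveRoot qm (n * k))
    (hq : qm ^ (k ^ 2) = qn)
    (s t : Lˣ)
    (hL : Algebra.adjoin ℂ
        ({(s : L), ((s⁻¹ : Lˣ) : L), (t : L), ((t⁻¹ : Lˣ) : L)} : Set L) = ⊤)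
    (Un Vn : Aˣ) (hrelA : (Vn : A) * Un = qn • ((Un : A) * Vn))
    (basA : Module.Basis (ℤ × ℤ) ℂ A)
    (hbasA : ∀ ij : ℤ × ℤ, basA ij = ((Un ^ ij.1 : Aˣ) : A) * ((Vn ^ ij.2 : Aˣ) : A))
    (hsA : algebraMap L A s = ((Un ^ n : Aˣ) : A))
    (htA : algebraMap L A t = ((Vn ^ n : Aˣ) : A))
    (Um Vm : Bˣ) (hrelB : (Vm : B) * Um = qm • ((Um : B) * Vm))
    (basB : Module.Basis (ℤ × ℤ) ℂ B)
    (hbasB : ∀ ij : ℤ × ℤ, basB ij = ((Um ^ ij.1 : Bˣ) : B) * ((Vm ^ ij.2 : Bˣ) : B))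
    (hsB : algebraMap L B s = ((Um ^ (n * k) : Bˣ) : B))
    (htB : algebraMap L B t = ((Vm ^ (n * k) : Bˣ) : B)) :
    ∃ f : A →ₐ[L] B, Function.Injective f ∧
      f ((Un : Aˣ) : A) = ((Um ^ k : Bˣ) : B) ∧
      f ((Vn : Aˣ) : A) = ((Vm ^ k : Bˣ) : B) := by
  obtain ⟨w, rfl⟩ := hqm.isUnit (by positivity)
  subst hq
  obtain ⟨f, hf_inj, hfU, hfV⟩ := exists_injective_algHom_quantumTorus (q := w ^ (k ^ 2)) w k
    (by exact_mod_cast hk.ne') (by norm_cast) (by simpa using hrelA) basA hbasA Um Vm hrelB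
    basB hbasB
  rw [zpow_natCast] at hfU hfV
  have hs : f (algebraMap L A s) = algebraMap L B s := by
    rw [hsA, hsB, Units.val_pow_eq_pow_val, map_pow, hfU, ← Units.val_pow_eq_pow_val, ← pow_mul,
      mul_comm]
  have ht : f (algebraMap L A t) = algebraMap L B t := by
    rw [htA, htB, Units.val_pow_eq_pow_val, map_pow, hfV, ← Units.val_pow_eq_pow_val, ← pow_mul,
      mul_comm]
  have hgen : ∀ x ∈ ({(s : L), ((s⁻¹ : Lˣ) : L), (t : L), ((t⁻¹ : Lˣ) : L)} : Set L),
      f (algebraMap L A x) = algebraMap L B x := by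
    rintro x (rfl | rfl | rfl | rfl)
    · exact hs
    · exact Units.eq_on_inv ((f : A →+* B).comp (algebraMap L A)) (algebraMap L B) hs
    · exact ht
    · exact Units.eq_on_inv ((f : A →+* B).comp (algebraMap L A)) (algebraMap L B) ht
  exact ⟨{ f with commutes' := f.commutes_of_adjoin_eq_top hL hgen }, hf_inj, hfU, hfV⟩

/-- Let `q_n` be a primitive `n`-th root of unity, `m = n·k`, and `q_m` a
primitive `m`-th root of unity with `q_m^{k²} = q_n`.  Let `L = ℂ[s^{±1}, t^{±1}]` (an
abstract commutative ℂ-algebra generated by units `s, t` and their inverses), and let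
`A = ℂ_{q_n}[U_n^{±1}, V_n^{±1}]` and `B = ℂ_{q_m}[U_m^{±1}, V_m^{±1}]` be the quantum tori
over `L`, with `U_n^n = s`, `V_n^n = t`, `U_m^m = s`, `V_m^m = t`.  Then the assignment
`U_n ↦ U_m^k`, `V_n ↦ V_m^k` extends to an injective `L`-algebra homomorphism `A → B`. -/
theorem quantum_torus_compatible_embedding
    (L A B : Type*) [CommRing L] [Algebra ℂ L] [Ring A] [Ring B]
    [Algebra ℂ A] [Algebra ℂ B] [Algebra L A] [Algebra L B]
    [IsScalarTower ℂ L A] [IsScalarTower ℂ L B]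
    (n k : ℕ) (hn : 0 < n) (hk : 0 < k)
    (qn qm : ℂ) (hqn : IsPrimitiveRoot qn n) (hqm : IsPrimitiveRoot qm (n * k))
    (hq : qm ^ (k ^ 2) = qn)
    (s t : Lˣ)
    (hL : Algebra.adjoin ℂ
        ({(s : L), ((s⁻¹ : Lˣ) : L), (t : L), ((t⁻¹ : Lˣ) : L)} : Set L) = ⊤)
    (Un Vn : Aˣ) (hrelA : (Vn : A) * Un = qn • ((Un : A) * Vn))
    (basA : Module.Basis (ℤ × ℤ) ℂ A)
    (hbasA : ∀ ij : ℤ × ℤ, basA ij = ((Un ^ ij.1 : Aˣ) : A) * ((Vn ^ ij.2 : Aˣ) : A))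
    (hsA : algebraMap L A s = ((Un ^ n : Aˣ) : A))
    (htA : algebraMap L A t = ((Vn ^ n : Aˣ) : A))
    (Um Vm : Bˣ) (hrelB : (Vm : B) * Um = qm • ((Um : B) * Vm))
    (basB : Module.Basis (ℤ × ℤ) ℂ B)
    (hbasB : ∀ ij : ℤ × ℤ, basB ij = ((Um ^ ij.1 : Bˣ) : B) * ((Vm ^ ij.2 : Bˣ) : B))
    (hsB : algebraMap L B s = ((Um ^ (n * k) : Bˣ) : B))
    (htB : algebraMap L B t = ((Vm ^ (n * k) : Bˣ) : B)) :
    ∃ f : A →ₐ[L] B, Function.Injective f ∧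
      f ((Un : Aˣ) : A) = ((Um ^ k : Bˣ) : B) ∧
      f ((Vn : Aˣ) : A) = ((Vm ^ k : Bˣ) : B) :=
  quantum_torus_compatible_embedding_general L A B n k hn hk qn qm hqm hq s t hL Un Vn hrelA basA
    hbasA hsA htA Um Vm hrelB basB hbasB hsB htB
end
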